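/- Let S be a k-sequence with M = max_i |s_i|, G the maximum entry of integer scoring matrix γ, N = C(k,2)·M, L = N·k²·M·G, and S^L the k-sequence obtained by appending σ^L to each sequence (scored by the extended matrix γ^σ). If C ≥ k²MG, then: (i) there is an alignment A of S with cost_SP^γ[A] ≤ C; (ii) the canonical alignment A^L satisfies cost_SPN1^{γ^σ}[A^L] ≤ C/L, cost_SPN2^{γ^σ}[A^L] ≤ C/L, and cost_SPN3^{γ^σ}[A^L] ≤ C/(C(k,2)·L). -/
import Mathlib


/-- Score (cost) of a pairwise alignment: sum of scoring-matrix entries over columns. -/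
def costA {α : Type} (γ : Option α → Option α → ℚ)
    (A : List (Option α × Option α)) : ℚ :=
  (A.map fun p => γ p.1 p.2).sum

/-- Normalized score of a pairwise alignment (0 when the alignment is empty,
    since division by zero is 0 in `ℚ`). -/
def costN {α : Type} (γ : Option α → Option α → ℚ)
    (A : List (Option α × Option α)) : ℚ :=
  costA γ A / (A.length : ℚ)

/-- `A` is an alignment of the 2-sequence `s, t`: removing spaces from the first
    (resp. second) row recovers `s` (resp. `t`) and no column is all spaces. -/
def IsPairAlign {α : Type} (s t : List α) (A : List (Option α × Option α)) : Prop :=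
  (A.map Prod.fst).reduceOption = s ∧ (A.map Prod.snd).reduceOption = t ∧
    ∀ p ∈ A, p.1 ≠ none ∨ p.2 ≠ none

/-- `A` is an alignment of the `k`-sequence `S` of length `L`. -/
def IsAlignment {α : Type} {k : ℕ} (S : Fin k → List α)
    (A : Fin k → List (Option α)) (L : ℕ) : Prop :=
  (∀ i, (A i).length = L) ∧ (∀ i, (A i).reduceOption = S i) ∧
    ∀ j < L, ∃ i, (A i).getD j none ≠ none

/-- The pairwise alignment induced by rows `h` and `i` of a multiple alignment
    (all-space columns removed). -/
def induced {α : Type} {k : ℕ} (A : Fin k → List (Option α)) (h i : Fin k) :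
    List (Option α × Option α) :=
  ((A h).zip (A i)).filter fun p => p.1.isSome || p.2.isSome

/-- The set of ordered pairs `h < i` of indices. -/
def pairs (k : ℕ) : Finset (Fin k × Fin k) :=
  Finset.univ.filter fun p => p.1 < p.2

/-- SP-score of a multiple alignment. -/
def costSP {α : Type} {k : ℕ} (γ : Option α → Option α → ℚ)
    (A : Fin k → List (Option α)) : ℚ :=
  ∑ p ∈ pairs k, costA γ (induced A p.1 p.2)

/-- Normalization criterion 1: SP-score divided by the alignment length. -/
def costSPN1 {α : Type} {k : ℕ} (γ : Option α → Option α → ℚ)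
    (A : Fin k → List (Option α)) (L : ℕ) : ℚ :=
  costSP γ A / (L : ℚ)

/-- Normalization criterion 2: sum of normalized pairwise scores. -/
def costSPN2 {α : Type} {k : ℕ} (γ : Option α → Option α → ℚ)
    (A : Fin k → List (Option α)) : ℚ :=
  ∑ p ∈ pairs k, costN γ (induced A p.1 p.2)

/-- Normalization criterion 3: SP-score divided by the sum of induced lengths. -/
def costSPN3 {α : Type} {k : ℕ} (γ : Option α → Option α → ℚ)
    (A : Fin k → List (Option α)) : ℚ :=
  costSP γ A / (∑ p ∈ pairs k, ((induced A p.1 p.2).length : ℚ))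

/-- The class `M^W` of scoring matrices. -/
def MW {α : Type} (γ : Option α → Option α → ℚ) : Prop :=
  (∀ a : α, γ (some a) none = γ none (some a) ∧ 0 < γ (some a) none) ∧
  (∀ a b : α, (a ≠ b → 0 < γ (some a) (some b)) ∧ γ (some a) (some a) = 0) ∧
  (∀ a b : α, γ (some a) (some b) < γ (some a) none + γ none (some b) →
    γ (some a) (some b) = γ (some b) (some a)) ∧
  (∀ a b : α, γ (some a) none ≤ γ (some a) (some b) + γ (some b) none) ∧
  (∀ a b c : α, min (γ (some a) (some c)) (γ (some a) none + γ none (some c)) ≤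
    γ (some a) (some b) + γ (some b) (some c))

/-- The class `M^N`. -/
def MN {α : Type} (γ : Option α → Option α → ℚ) : Prop :=
  MW γ ∧ ∀ a b : α, γ (some a) none ≤ 2 * γ (some b) none

/-- Extended alphabet with a fresh symbol `σ` (`Sum.inr ()`). -/
abbrev SigExt (α : Type) : Type := α ⊕ Unit

/-- Scoring matrix `γ^σ` extending `γ` by scoring the new symbol `σ` with `G`
    against anything else and `0` against itself. -/
def extMat {α : Type} (γ : Option α → Option α → ℚ) (G : ℚ) :
    Option (SigExt α) → Option (SigExt α) → ℚ
  | some (Sum.inr _), some (Sum.inr _) => 0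
  | some (Sum.inr _), _ => G
  | _, some (Sum.inr _) => G
  | none, none => γ none none
  | none, some (Sum.inl a) => γ none (some a)
  | some (Sum.inl a), none => γ (some a) none
  | some (Sum.inl a), some (Sum.inl b) => γ (some a) (some b)

/-- Canonical extension `A^L`: append `L` all-`σ` columns to the alignment `A`. -/
def extendA {α : Type} {k : ℕ} (A : Fin k → List (Option α)) (L : ℕ) :
    Fin k → List (Option (SigExt α)) :=
  fun i => (A i).map (Option.map Sum.inl) ++ List.replicate L (some (Sum.inr ()))


section Helpers

lemma countP_or_le {β : Type*} (f g : β → Bool) (l : List β) :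
    l.countP (fun x => f x || g x) ≤ l.countP f + l.countP g := by
  induction l with
  | nil => simp
  | cons a t ih =>
    simp only [List.countP_cons]
    cases hf : f a <;> cases hg : g a <;> simp [hf, hg] <;> omega

lemma countP_zip_fst {β γ' : Type*} (f : β → Bool) :
    ∀ (l1 : List β) (l2 : List γ'), ((l1.zip l2).countP fun p => f p.1) ≤ l1.countP f := by
  intro l1
  induction l1 with
  | nil => simp
  | cons a t ih =>
    intro l2
    cases l2 with
    | nil => simp
    | cons b t2 =>
      simp only [List.zip_cons_cons, List.countP_cons]
      exact add_le_add (ih t2) le_rfl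

lemma countP_zip_snd {β γ' : Type*} (f : γ' → Bool) :
    ∀ (l1 : List β) (l2 : List γ'), ((l1.zip l2).countP fun p => f p.2) ≤ l2.countP f := by
  intro l1
  induction l1 with
  | nil => simp
  | cons a t ih =>
    intro l2
    cases l2 with
    | nil => simp
    | cons b t2 =>
      simp only [List.zip_cons_cons, List.countP_cons]
      exact add_le_add (ih t2) le_rfl

lemma countP_isSome {β : Type*} (l : List (Option β)) :
    l.countP Option.isSome = l.reduceOption.length := by
  induction l with
  | nil => simp
  | cons a t ih => cases a <;> simp [List.countP_cons, ih]

lemma reduceOption_map_some' {β : Type*} (l : List β) : (l.map some).reduceOption = l := by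
  induction l <;> simp_all

lemma reduceOption_replicate_none' {β : Type*} (n : ℕ) :
    (List.replicate n (none : Option β)).reduceOption = [] := by
  induction n <;> simp_all [List.replicate_succ]

lemma card_pairs (k : ℕ) : (pairs k).card = k.choose 2 := by
  rw [pairs, Finset.card_filter, Fintype.sum_prod_type]
  rw [Finset.sum_comm]
  have h1 : ∀ b : Fin k, (∑ a : Fin k, if a < b then 1 else 0) = (b : ℕ) := by
    intro b
    simp only [Fin.lt_def]
    rw [Fin.sum_univ_eq_sum_range (fun i => if i < (b : ℕ) then 1 else 0) k]
    rw [Finset.sum_ite, Finset.sum_const_zero, add_zero]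
    simp only [Finset.sum_const, smul_eq_mul, mul_one]
    have : Finset.filter (fun i => i < (b : ℕ)) (Finset.range k) = Finset.range (b : ℕ) := by
      ext x
      simp only [Finset.mem_filter, Finset.mem_range]
      exact ⟨fun h => h.2, fun h => ⟨h.trans b.isLt, h⟩⟩
    rw [this, Finset.card_range]
  simp only [h1]
  rw [Fin.sum_univ_eq_sum_range (fun i => i) k]
  have h2 := Finset.sum_range_id_mul_two k
  rw [Nat.choose_two_right]
  omega

lemma induced_extendA {α : Type} {k : ℕ} (A : Fin k → List (Option α)) (L : ℕ) (h i : Fin k)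
    (hlen : (A h).length = (A i).length) :
    induced (extendA A L) h i =
      ((induced A h i).map (Prod.map (Option.map Sum.inl) (Option.map Sum.inl)))
        ++ List.replicate L (some (Sum.inr ()), some (Sum.inr ())) := by
  unfold induced extendA
  rw [List.zip_append (by simpa using hlen), List.filter_append, List.zip_map,
    List.filter_map, List.zip_replicate, min_self, List.filter_replicate]
  congr 1
  · exact congrArg _ (List.filter_congr (fun p _ => by
      obtain ⟨a, b⟩ := p; cases a <;> cases b <;> rfl))

lemma costA_append' {α : Type} (γ : Option α → Option α → ℚ)
    (l1 l2 : List (Option α × Option α)) :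
    costA γ (l1 ++ l2) = costA γ l1 + costA γ l2 := by
  simp [costA]

lemma costA_map_inl {α : Type} (γ : Option α → Option α → ℚ) (G : ℚ)
    (l : List (Option α × Option α)) :
    costA (extMat γ G) (l.map (Prod.map (Option.map Sum.inl) (Option.map Sum.inl)))
      = costA γ l := by
  unfold costA
  rw [List.map_map]
  apply congrArg
  apply List.map_congr_left
  intro p _
  obtain ⟨a, b⟩ := p
  cases a <;> cases b <;> rfl

lemma costA_replicate_sig {α : Type} (γ : Option α → Option α → ℚ) (G : ℚ) (L : ℕ) :
    costA (extMat γ G) (List.replicate L (some (Sum.inr ()), some (Sum.inr ()))) = 0 := by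
  unfold costA
  rw [List.map_replicate]
  simp [extMat]

lemma costA_nonneg' {α : Type} (γ : Option α → Option α → ℚ) (h : ∀ a b, 0 ≤ γ a b)
    (A : List (Option α × Option α)) : 0 ≤ costA γ A := by
  unfold costA
  apply List.sum_nonneg
  intro x hx
  obtain ⟨p, -, rfl⟩ := List.mem_map.mp hx
  exact h _ _

lemma costA_le_bound {α : Type} (γ : Option α → Option α → ℚ) (G : ℚ)
    (h : ∀ a b, γ a b ≤ G) (A : List (Option α × Option α)) :
    costA γ A ≤ G * A.length := by
  induction A with
  | nil => simp [costA]
  | cons p t ih =>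
    simp only [costA, List.map_cons, List.sum_cons, List.length_cons] at *
    push_cast
    have := h p.1 p.2
    linarith

lemma length_induced_le {α : Type} {k : ℕ} {S : Fin k → List α}
    {A : Fin k → List (Option α)} {ℓ : ℕ}
    (hA : IsAlignment S A ℓ) (h i : Fin k) :
    (induced A h i).length ≤ (S h).length + (S i).length := by
  have e : (induced A h i).length
      = ((A h).zip (A i)).countP fun p => p.1.isSome || p.2.isSome := by
    rw [induced, ← List.countP_eq_length_filter]
  calc (induced A h i).length
      ≤ (((A h).zip (A i)).countP fun p => p.1.isSome)
        + ((A h).zip (A i)).countP fun p => p.2.isSome := by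
        rw [e]; exact countP_or_le _ _ _
    _ ≤ (A h).countP Option.isSome + (A i).countP Option.isSome :=
        add_le_add (countP_zip_fst _ _ _) (countP_zip_snd _ _ _)
    _ = (S h).length + (S i).length := by
        rw [countP_isSome, countP_isSome, hA.2.1 h, hA.2.1 i]

end Helpers

/-- Lemma `AVSNz-MSA`: with `N = C(k,2)·M` and `L = N·k²·M·G`,
    if `C ≥ k²·M·G` then (i) some alignment of `S` has SP-score at most `C`,
    and (ii) every canonical extension `A^L` satisfies
    `costSPN1 ≤ C/L`, `costSPN2 ≤ C/L` and `costSPN3 ≤ C/(C(k,2)·L)`. -/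
theorem msa_to_nmsa_yes {α : Type} {k : ℕ} (hk : 2 ≤ k)
    (γ : Option α → Option α → ℚ) (G : ℕ) (hG1 : 1 ≤ G)
    (hsym : ∀ a b, γ a b = γ b a) (hzero : ∀ a b, γ a b = 0 ↔ a = b)
    (hpos : ∀ a b, 0 ≤ γ a b) (hGmax : ∀ a b, γ a b ≤ (G : ℚ))
    (S : Fin k → List α) (M : ℕ) (hM1 : 1 ≤ M) (hM : ∀ i, (S i).length ≤ M)
    (N L : ℕ) (hN : N = k.choose 2 * M) (hL : L = N * k ^ 2 * M * G)
    (C : ℚ) (hC : ((k : ℚ) ^ 2 * M * G) ≤ C) :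
    (∃ (A : Fin k → List (Option α)) (ℓ : ℕ),
      IsAlignment S A ℓ ∧ costSP γ A ≤ C) ∧
    (∀ (A : Fin k → List (Option α)) (ℓ : ℕ), IsAlignment S A ℓ →
      costSPN1 (extMat γ (G : ℚ)) (extendA A L) (ℓ + L) ≤ C / (L : ℚ) ∧
      costSPN2 (extMat γ (G : ℚ)) (extendA A L) ≤ C / (L : ℚ) ∧
      costSPN3 (extMat γ (G : ℚ)) (extendA A L) ≤ C / ((k.choose 2 : ℚ) * L)) := by
  have hk0 : 0 < k := by omega
  have hchoose_pos : 0 < k.choose 2 := Nat.choose_pos hk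
  have hN0 : N ≠ 0 := by
    rw [hN]; exact Nat.mul_ne_zero (by omega) (by omega)
  have hL0 : L ≠ 0 := by
    rw [hL]
    exact Nat.mul_ne_zero
      (Nat.mul_ne_zero (Nat.mul_ne_zero hN0 (pow_ne_zero 2 (by omega))) (by omega)) (by omega)
  have hLQ : (0:ℚ) < (L:ℚ) := by exact_mod_cast Nat.pos_of_ne_zero hL0
  have hGQ : (0:ℚ) ≤ (G:ℚ) := by positivity
  have hC0 : 0 ≤ C := le_trans (by positivity) hC
  have key : ∀ (A : Fin k → List (Option α)) (ℓ : ℕ), IsAlignment S A ℓ → costSP γ A ≤ C := by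
    intro A ℓ hA
    have hn : (k.choose 2 : ℚ) * 2 ≤ (k:ℚ)^2 := by
      have h1 : k.choose 2 * 2 ≤ k ^ 2 := by
        rw [Nat.choose_two_right, pow_two]
        calc k * (k-1) / 2 * 2 ≤ k * (k-1) := Nat.div_mul_le_self _ _
          _ ≤ k * k := Nat.mul_le_mul_left _ (Nat.sub_le _ _)
      exact_mod_cast h1
    have hpair : ∀ p ∈ pairs k, costA γ (induced A p.1 p.2) ≤ 2 * (M:ℚ) * G := by
      intro p _
      have h1 := length_induced_le hA p.1 p.2
      have h2 := costA_le_bound γ (G:ℚ) hGmax (induced A p.1 p.2)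
      have h3 : ((induced A p.1 p.2).length : ℚ) ≤ 2 * M := by
        have hm1 := hM p.1
        have hm2 := hM p.2
        have : (induced A p.1 p.2).length ≤ 2 * M := by omega
        exact_mod_cast this
      nlinarith [Nat.cast_nonneg (α := ℚ) (induced A p.1 p.2).length]
    calc costSP γ A ≤ ∑ _p ∈ pairs k, 2 * (M:ℚ) * G := Finset.sum_le_sum hpair
      _ = (k.choose 2 : ℚ) * (2 * M * G) := by
          rw [Finset.sum_const, card_pairs, nsmul_eq_mul]
      _ ≤ (k:ℚ)^2 * M * G := by nlinarith [mul_nonneg (Nat.cast_nonneg (α := ℚ) M) hGQ]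
      _ ≤ C := hC
  obtain ⟨A0, ℓ0, hA0⟩ : ∃ A ℓ, IsAlignment S A ℓ := by
    refine ⟨fun i => (S i).map some
        ++ List.replicate ((Finset.univ.sup fun i => (S i).length) - (S i).length) none,
      Finset.univ.sup fun i => (S i).length, ?_, ?_, ?_⟩
    · intro i
      simp only [List.length_append, List.length_map, List.length_replicate]
      have : (S i).length ≤ Finset.univ.sup fun i => (S i).length :=
        Finset.le_sup (f := fun i => (S i).length) (Finset.mem_univ i)
      omega
    · intro i
      rw [List.reduceOption_append, reduceOption_map_some', reduceOption_replicate_none',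
        List.append_nil]
    · intro j hj
      obtain ⟨i0, -, hi0⟩ := Finset.exists_mem_eq_sup Finset.univ
        ⟨⟨0, hk0⟩, Finset.mem_univ _⟩ fun i => (S i).length
      refine ⟨i0, ?_⟩
      have hj' : j < ((S i0).map some).length := by rw [List.length_map]; omega
      rw [List.getD_append _ _ _ _ hj', List.getD_eq_getElem _ _ hj', List.getElem_map]
      simp
  refine ⟨⟨A0, ℓ0, hA0, key A0 ℓ0 hA0⟩, ?_⟩
  intro A ℓ hA
  have hcost := key A ℓ hA
  have hlenp : ∀ p : Fin k × Fin k,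
      (induced (extendA A L) p.1 p.2).length = (induced A p.1 p.2).length + L := by
    intro p
    rw [induced_extendA A L p.1 p.2 (by rw [hA.1 p.1, hA.1 p.2])]
    simp
  have hcostp : ∀ p : Fin k × Fin k,
      costA (extMat γ (G:ℚ)) (induced (extendA A L) p.1 p.2) = costA γ (induced A p.1 p.2) := by
    intro p
    rw [induced_extendA A L p.1 p.2 (by rw [hA.1 p.1, hA.1 p.2]), costA_append',
      costA_map_inl, costA_replicate_sig, add_zero]
  have hSPext : costSP (extMat γ (G:ℚ)) (extendA A L) = costSP γ A :=
    Finset.sum_congr rfl fun p _ => hcostp p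
  refine ⟨?_, ?_, ?_⟩
  · unfold costSPN1
    rw [hSPext]
    refine div_le_div₀ hC0 hcost hLQ ?_
    push_cast
    linarith [Nat.cast_nonneg (α := ℚ) ℓ]
  · unfold costSPN2
    have step1 : ∀ p ∈ pairs k,
        costN (extMat γ (G:ℚ)) (induced (extendA A L) p.1 p.2)
          ≤ costA γ (induced A p.1 p.2) / L := by
      intro p _
      unfold costN
      rw [hcostp p, hlenp p]
      refine div_le_div₀ (costA_nonneg' γ hpos _) le_rfl hLQ ?_
      push_cast
      linarith [Nat.cast_nonneg (α := ℚ) (induced A p.1 p.2).length]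
    calc ∑ p ∈ pairs k, costN (extMat γ (G:ℚ)) (induced (extendA A L) p.1 p.2)
        ≤ ∑ p ∈ pairs k, costA γ (induced A p.1 p.2) / L := Finset.sum_le_sum step1
      _ = costSP γ A / L := by rw [costSP, Finset.sum_div]
      _ ≤ C / L := by gcongr
  · unfold costSPN3
    rw [hSPext]
    have hden : ((k.choose 2 : ℚ) * L)
        ≤ ∑ p ∈ pairs k, ((induced (extendA A L) p.1 p.2).length : ℚ) := by
      calc (k.choose 2 : ℚ) * L = ∑ _p ∈ pairs k, (L:ℚ) := by
            rw [Finset.sum_const, card_pairs, nsmul_eq_mul]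
        _ ≤ _ := by
            refine Finset.sum_le_sum fun p _ => ?_
            rw [hlenp p]
            push_cast
            linarith [Nat.cast_nonneg (α := ℚ) (induced A p.1 p.2).length]
    have hdpos : (0:ℚ) < (k.choose 2 : ℚ) * L :=
      mul_pos (by exact_mod_cast hchoose_pos) hLQ
    exact div_le_div₀ hC0 hcost hdpos hden
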